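/- Let M be the metric fan and G the Megrelishvili group with the compact-open topology, acting on M by evaluation. Then for every compact Hausdorff space K with a continuous G-action and every continuous G-equivariant map i : M → K with dense image, the sequence (i(eₙ))_{n≥1} converges to i(0) in K; in particular, since (eₙ) does not converge to 0 in M, the map i is not a topological embedding. -/

import Mathlib

noncomputable section

/-- The group of self-homeomorphisms of a topological space, under composition. -/
instance homeoGroup (X : Type*) [TopologicalSpace X] : Group (X ≃ₜ X) where
  mul a b := b.trans a
  one := Homeomorph.refl X
  inv := Homeomorph.symm
  mul_assoc a b c := Homeomorph.ext fun _ => rfl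
  one_mul a := Homeomorph.ext fun _ => rfl
  mul_one a := Homeomorph.ext fun _ => rfl
  inv_mul_cancel a := Homeomorph.ext fun x => a.symm_apply_apply x

/-- The real Hilbert space `ℓ²(ℕ₊)`. -/
abbrev FanAmbient : Type := lp (fun _ : ℕ+ => ℝ) 2

/-- The `n`-th basic vector `eₙ` of `ℓ²(ℕ₊)`, `n ≥ 1`. -/
def fanBasis (n : ℕ+) : FanAmbient := lp.single 2 n 1

/-- The metric fan: the union of the straight-line segments `[0, eₙ]`, `n ≥ 1`,
inside `ℓ²(ℕ₊)`, with the subspace topology. -/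
def MetricFan : Set FanAmbient := ⋃ n : ℕ+, segment ℝ 0 (fanBasis n)

/-- The marked points of the metric fan: the points `(1/k)eₙ`, `k, n ≥ 1`. -/
def FanMarked : Set ↥MetricFan :=
  {x | ∃ k n : ℕ+, (x : FanAmbient) = ((k : ℝ))⁻¹ • fanBasis n}

/-- The Megrelishvili group: all homeomorphisms of the metric fan fixing every
marked point. -/
def MegGroup : Subgroup (↥MetricFan ≃ₜ ↥MetricFan) where
  carrier := {g | ∀ x ∈ FanMarked, g x = x}
  one_mem' := fun x _ => rfl
  mul_mem' := by
    intro a b ha hb x hx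
    show a (b x) = x
    rw [hb x hx, ha x hx]
  inv_mem' := by
    intro a ha x hx
    show a.symm x = x
    conv_lhs => rw [← ha x hx]
    exact a.symm_apply_apply x

/-- The Megrelishvili group carries the compact-open topology. -/
instance : TopologicalSpace MegGroup :=
  TopologicalSpace.induced
    (fun g : MegGroup => toContinuousMap (g : ↥MetricFan ≃ₜ ↥MetricFan))
    ContinuousMap.compactOpen

/-- The endpoint `eₙ` of the metric fan. -/
def fanPoint (n : ℕ+) : ↥MetricFan :=
  ⟨fanBasis n, Set.mem_iUnion.2 ⟨n, right_mem_segment ℝ 0 (fanBasis n)⟩⟩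

/-- The base point `0` of the metric fan. -/
def fanZero : ↥MetricFan :=
  ⟨0, Set.mem_iUnion.2 ⟨1, left_mem_segment ℝ 0 (fanBasis 1)⟩⟩

/-!
Fix an ultrafilter `𝒰` on `ℕ₊` finer than the cofinite filter and compare, level by level, the
`𝒰`-limits in `K` of the points `i (t • eₙ)`. An element of `G` can push the midpoint of
`(1/(k+1), 1/k)` to any point of that interval along the `n`-th segment and fix everything else.
A compact subset of the fan enters the interior of that interval on only finitely many
segments, so these pushes tend to `1` in the compact-open topology as `n → ∞`, uniformly in the
target point. Continuity of the action then makes the limit constant on `[1/(k+1), 1/k]`, hence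
the same at every level `1/k`; since `(1/k) • eₙ → 0` uniformly in `n`, the common limit is
`i 0`.
-/

open Set Filter Topology

lemma exists_orderIso_apply_midpoint_eq {a b t : ℝ} (ht : t ∈ Ioo a b) :
    ∃ φ : ℝ ≃o ℝ, φ ((a + b) / 2) = t ∧ ∀ s ∉ Ioo a b, φ s = s := by
  set m := (a + b) / 2
  set r := (b - a) / 2
  have hr : 0 < r := by simp only [r]; linarith [ht.1, ht.2]
  -- `f` adds to the identity `t - m` times a tent of height `1` on `[a, b]`; as `|t - m| < r` this
  -- perturbation is a contraction, so `f` stays strictly monotone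
  set τ : ℝ → ℝ := fun s => max (1 - |s - m| / r) 0
  set f : ℝ → ℝ := fun s => s + (t - m) * τ s
  have hτ_lip (s s' : ℝ) : |τ s' - τ s| ≤ |s' - s| / r := by
    refine (abs_max_sub_max_le_abs _ _ 0).trans ?_
    rw [sub_sub_sub_cancel_left, ← sub_div, abs_div, abs_of_pos hr]
    refine div_le_div_of_nonneg_right ?_ hr.le
    simpa only [sub_sub_sub_cancel_right, abs_sub_comm s] using
      abs_abs_sub_abs_le_abs_sub (s - m) (s' - m)
  have hτ_off (s : ℝ) (hs : s ∉ Ioo a b) : τ s = 0 := by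
    have : r ≤ |s - m| := by
      rw [mem_Ioo, not_and_or, not_lt, not_lt] at hs
      rcases hs with hs | hs
      · rw [abs_sub_comm]; exact le_abs.2 (Or.inl (by simp only [r, m]; linarith))
      · exact le_abs.2 (Or.inl (by simp only [r, m]; linarith))
    simp only [τ, max_eq_right_iff, sub_nonpos, one_le_div hr, this]
  have hf_off (s : ℝ) (hs : s ∉ Ioo a b) : f s = s := by simp [f, hτ_off s hs]
  have hf_mono : StrictMono f := by
    intro s s' hss'
    have htm : |t - m| < r := abs_sub_lt_iff.2 ⟨by simp only [r, m]; linarith [ht.2],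
      by simp only [r, m]; linarith [ht.1]⟩
    have : |(t - m) * (τ s' - τ s)| < s' - s :=
      calc |(t - m) * (τ s' - τ s)| ≤ |t - m| * (|s' - s| / r) := by
            rw [abs_mul]; gcongr; exact hτ_lip s s'
        _ < r * (|s' - s| / r) := by gcongr
        _ = s' - s := by rw [mul_div_cancel₀ _ hr.ne', abs_of_pos (sub_pos.2 hss')]
    have := neg_lt_of_abs_lt this
    simp only [f]
    linarith
  have hf_top : f =ᶠ[atTop] id :=
    (eventually_ge_atTop b).mono fun s hs => hf_off s fun h => h.2.not_ge hs
  have hf_bot : f =ᶠ[atBot] id :=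
    (eventually_le_atBot a).mono fun s hs => hf_off s fun h => h.1.not_ge hs
  have hf_surj : Function.Surjective f := Continuous.surjective (by fun_prop)
    (tendsto_id.congr' hf_top.symm) (tendsto_id.congr' hf_bot.symm)
  refine ⟨hf_mono.orderIsoOfSurjective f hf_surj, ?_, hf_off⟩
  simp [f, τ]

lemma inv_natCast_notMem_Ioo (k k' : ℕ) : ((k' : ℝ))⁻¹ ∉ Ioo ((k : ℝ) + 1)⁻¹ (k : ℝ)⁻¹ := by
  rintro ⟨h1, h2⟩
  have hpos : (0 : ℝ) < ((k : ℝ) + 1)⁻¹ := by positivity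
  have hk' : (0 : ℝ) < k' := inv_pos.1 (hpos.trans h1)
  have hk : (0 : ℝ) < k := inv_pos.1 (hpos.trans (h1.trans h2))
  have h1 : (k' : ℝ) < k + 1 := (inv_lt_inv₀ (by positivity) hk').1 h1
  have h2 : (k : ℝ) < k' := (inv_lt_inv₀ hk' hk).1 h2
  norm_cast at h1 h2
  omega

lemma smul_fanBasis (t : ℝ) (n : ℕ+) : t • fanBasis n = lp.single 2 n t := by
  rw [fanBasis, ← lp.single_smul, smul_eq_mul, mul_one]

lemma smul_fanBasis_mem (n : ℕ+) {t : ℝ} (ht : t ∈ Icc (0 : ℝ) 1) :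
    t • fanBasis n ∈ MetricFan :=
  mem_iUnion.2 ⟨n, segment_eq_image' ℝ 0 (fanBasis n) ▸ ⟨t, ht, by simp⟩⟩

lemma mem_metricFan_iff {x : FanAmbient} :
    x ∈ MetricFan ↔ ∃ n : ℕ+, ∃ t ∈ Icc (0 : ℝ) 1, x = t • fanBasis n := by
  simp only [MetricFan, mem_iUnion, segment_eq_image', sub_zero, zero_add, mem_image]
  exact exists_congr fun n => exists_congr fun t => and_congr_right fun _ => eq_comm

lemma eq_of_apply_ne_zero {x : FanAmbient} (hx : x ∈ MetricFan) {p n : ℕ+}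
    (hp : x p ≠ 0) (hn : x n ≠ 0) : p = n := by
  obtain ⟨q, t, -, rfl⟩ := mem_metricFan_iff.1 hx
  rw [smul_fanBasis] at hp hn
  by_contra hpn
  rcases eq_or_ne p q with rfl | hpq
  · exact hn (lp.single_apply_ne (E := fun _ : ℕ+ => ℝ) 2 p t (Ne.symm hpn))
  · exact hp (lp.single_apply_ne (E := fun _ : ℕ+ => ℝ) 2 q t hpq)

lemma continuous_apply_fanAmbient (n : ℕ+) : Continuous fun x : FanAmbient => x n :=
  (lp.evalCLM ℝ (fun _ : ℕ+ => ℝ) 2 n).continuous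

/-- The point `t • eₙ` of the fan, with `t` clamped to `[0, 1]`. -/
def fanPt (t : ℝ) (n : ℕ+) : ↥MetricFan :=
  ⟨(projIcc 0 1 zero_le_one t : ℝ) • fanBasis n, smul_fanBasis_mem n (projIcc 0 1 _ t).2⟩

lemma coe_fanPt {t : ℝ} (ht : t ∈ Icc (0 : ℝ) 1) (n : ℕ+) :
    (fanPt t n : FanAmbient) = t • fanBasis n := by
  change (projIcc 0 1 zero_le_one t : ℝ) • fanBasis n = _
  rw [projIcc_of_mem _ ht]

lemma continuous_fanPt (n : ℕ+) : Continuous fun t => fanPt t n :=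
  ((continuous_subtype_val.comp continuous_projIcc).smul continuous_const).subtype_mk _

lemma fanPt_one (n : ℕ+) : fanPt 1 n = fanPoint n :=
  Subtype.ext <| (coe_fanPt ⟨zero_le_one, le_rfl⟩ n).trans (one_smul ℝ _)

lemma dist_fanPt_fanZero {t : ℝ} (ht : t ∈ Icc (0 : ℝ) 1) (n : ℕ+) :
    dist (fanPt t n) fanZero = t := by
  rw [Subtype.dist_eq, coe_fanPt ht, fanZero, dist_zero_right, smul_fanBasis,
    lp.norm_single two_pos, Real.norm_of_nonneg ht.1]

lemma not_tendsto_fanPoint_fanZero : ¬ Tendsto fanPoint atTop (𝓝 fanZero) := by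
  intro h
  obtain ⟨n, hn⟩ := (Metric.tendsto_nhds.1 h 1 one_pos).exists
  rw [← fanPt_one, dist_fanPt_fanZero ⟨zero_le_one, le_rfl⟩] at hn
  exact hn.false

section FanCoordMap

variable (φ : ℝ → ℝ) (n : ℕ+)

def fanCoordMap (x : FanAmbient) : FanAmbient :=
  x + lp.single 2 n (φ (x n) - x n)

variable {φ n}

lemma fanCoordMap_apply_self (x : FanAmbient) : fanCoordMap φ n x n = φ (x n) := by
  simp [fanCoordMap]

lemma fanCoordMap_of_apply_eq {x : FanAmbient} (hx : φ (x n) = x n) : fanCoordMap φ n x = x := by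
  simp [fanCoordMap, hx]

lemma fanCoordMap_smul_fanBasis (t : ℝ) : fanCoordMap φ n (t • fanBasis n) = φ t • fanBasis n := by
  simp only [fanCoordMap, smul_fanBasis, lp.single_apply_self, ← lp.single_add, add_sub_cancel]

lemma fanCoordMap_fanCoordMap {ψ : ℝ → ℝ} (h : ∀ s, ψ (φ s) = s) (x : FanAmbient) :
    fanCoordMap ψ n (fanCoordMap φ n x) = x := by
  rw [fanCoordMap, fanCoordMap_apply_self, h, fanCoordMap, add_assoc, ← lp.single_add]
  simp

lemma continuous_fanCoordMap (hφ : Continuous φ) : Continuous (fanCoordMap φ n) := by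
  have hx := continuous_apply_fanAmbient n
  exact continuous_id.add ((lp.singleContinuousLinearMap ℝ (fun _ : ℕ+ => ℝ) 2 n).continuous.comp
    ((hφ.comp hx).sub hx))

lemma fanCoordMap_mem (hφ : Monotone φ) (h0 : φ 0 = 0) (h1 : φ 1 = 1) {x : FanAmbient}
    (hx : x ∈ MetricFan) : fanCoordMap φ n x ∈ MetricFan := by
  obtain ⟨p, t, ht, rfl⟩ := mem_metricFan_iff.1 hx
  rcases eq_or_ne p n with rfl | hpn
  · rw [fanCoordMap_smul_fanBasis]
    exact smul_fanBasis_mem p ⟨h0 ▸ hφ ht.1, h1 ▸ hφ ht.2⟩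
  · rwa [fanCoordMap_of_apply_eq]
    rw [smul_fanBasis, lp.single_apply_ne (E := fun _ : ℕ+ => ℝ) 2 p t hpn.symm, h0]

end FanCoordMap

section FanHomeo

variable (φ : ℝ ≃o ℝ) (h0 : φ 0 = 0) (h1 : φ 1 = 1) (n : ℕ+)

def fanHomeo : ↥MetricFan ≃ₜ ↥MetricFan where
  toFun x := ⟨fanCoordMap φ n x, fanCoordMap_mem φ.monotone h0 h1 x.2⟩
  invFun x := ⟨fanCoordMap φ.symm n x, fanCoordMap_mem φ.symm.monotone
    (φ.symm_apply_eq.2 h0.symm) (φ.symm_apply_eq.2 h1.symm) x.2⟩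
  left_inv x := Subtype.ext <| fanCoordMap_fanCoordMap φ.symm_apply_apply x
  right_inv x := Subtype.ext <| fanCoordMap_fanCoordMap φ.apply_symm_apply x
  continuous_toFun :=
    ((continuous_fanCoordMap φ.continuous).comp continuous_subtype_val).subtype_mk _
  continuous_invFun :=
    ((continuous_fanCoordMap φ.symm.continuous).comp continuous_subtype_val).subtype_mk _

variable {φ n}

lemma fanHomeo_fanPt {t : ℝ} (ht : t ∈ Icc (0 : ℝ) 1) :
    fanHomeo φ h0 h1 n (fanPt t n) = fanPt (φ t) n := by
  have hφt : φ t ∈ Icc (0 : ℝ) 1 := ⟨h0 ▸ φ.monotone ht.1, h1 ▸ φ.monotone ht.2⟩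
  refine Subtype.ext ?_
  change fanCoordMap φ n (fanPt t n) = _
  rw [coe_fanPt ht, coe_fanPt hφt, fanCoordMap_smul_fanBasis]

lemma fanHomeo_of_apply_eq {x : ↥MetricFan} (hx : φ ((x : FanAmbient) n) = (x : FanAmbient) n) :
    fanHomeo φ h0 h1 n x = x :=
  Subtype.ext <| fanCoordMap_of_apply_eq hx

lemma fanHomeo_mem_megGroup (hφ : ∀ k : ℕ+, φ (k : ℝ)⁻¹ = (k : ℝ)⁻¹) :
    fanHomeo φ h0 h1 n ∈ MegGroup := by
  rintro x ⟨k, p, hx⟩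
  refine fanHomeo_of_apply_eq h0 h1 ?_
  rw [hx, smul_fanBasis]
  rcases eq_or_ne n p with rfl | hnp
  · rw [lp.single_apply_self (E := fun _ : ℕ+ => ℝ), hφ]
  · rw [lp.single_apply_ne (E := fun _ : ℕ+ => ℝ) 2 p _ hnp, h0]

end FanHomeo

lemma exists_megGroup_fanPt_midpoint {a b t : ℝ} (ha : 0 < a) (hb : b ≤ 1)
    (hfree : ∀ k : ℕ+, (k : ℝ)⁻¹ ∉ Ioo a b) (ht : t ∈ Ioo a b) (n : ℕ+) :
    ∃ g : MegGroup, (g : ↥MetricFan ≃ₜ ↥MetricFan) (fanPt ((a + b) / 2) n) = fanPt t n ∧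
      ∀ x : ↥MetricFan, (x : FanAmbient) n ∉ Ioo a b → (g : ↥MetricFan ≃ₜ ↥MetricFan) x = x := by
  obtain ⟨φ, hφm, hφ⟩ := exists_orderIso_apply_midpoint_eq ht
  have h0 : φ 0 = 0 := hφ 0 fun h => ha.not_gt h.1
  have h1 : φ 1 = 1 := hφ 1 fun h => hb.not_gt h.2
  refine ⟨⟨fanHomeo φ h0 h1 n, fanHomeo_mem_megGroup h0 h1 fun k => hφ _ (hfree k)⟩, ?_,
    fun x hx => fanHomeo_of_apply_eq h0 h1 (hφ _ hx)⟩
  have hm : (a + b) / 2 ∈ Icc (0 : ℝ) 1 := ⟨by linarith [ht.1, ht.2], by linarith [ht.1, ht.2]⟩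
  exact (fanHomeo_fanPt h0 h1 hm).trans (congrArg (fanPt · n) hφm)

lemma tendsto_megGroup_nhds_one {ι : Type*} {l : Filter ι} {g : ι → MegGroup}
    (h : ∀ C : Set ↥MetricFan, IsCompact C →
      ∀ᶠ j in l, ∀ x ∈ C, (g j : ↥MetricFan ≃ₜ ↥MetricFan) x = x) :
    Tendsto g l (𝓝 1) := by
  rw [nhds_induced, tendsto_comap_iff, ContinuousMap.tendsto_nhds_compactOpen]
  intro C hC U _ hCU
  filter_upwards [h C hC] with j hj x hx
  simpa [hj x hx] using hCU hx

lemma eventually_cofinite_forall_apply_le {a : ℝ} (ha : 0 < a) {C : Set ↥MetricFan}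
    (hC : IsCompact C) : ∀ᶠ n in cofinite, ∀ x ∈ C, (x : FanAmbient) n ≤ a := by
  set U : ℕ+ → Set ↥MetricFan := fun p => {x | a / 2 < (x : FanAmbient) p ∨ ‖(x : FanAmbient)‖ < a}
  have hU_open (p : ℕ+) : IsOpen (U p) :=
    (isOpen_lt continuous_const ((continuous_apply_fanAmbient p).comp continuous_subtype_val)).union
      (isOpen_lt (continuous_norm.comp continuous_subtype_val) continuous_const)
  have hU_cover : C ⊆ ⋃ p, U p := by
    rintro ⟨x, hx⟩ -
    obtain ⟨p, t, ht, rfl⟩ := mem_metricFan_iff.1 hx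
    refine mem_iUnion.2 ⟨p, ?_⟩
    change a / 2 < (t • fanBasis p) p ∨ ‖t • fanBasis p‖ < a
    rw [smul_fanBasis, lp.single_apply_self, lp.norm_single two_pos,
      Real.norm_of_nonneg ht.1]
    exact (lt_or_ge t a).elim Or.inr fun h => Or.inl (by linarith)
  obtain ⟨T, hT⟩ := hC.elim_finite_subcover U hU_open hU_cover
  refine T.finite_toSet.subset fun n hn => ?_
  have hn : ¬ ∀ x ∈ C, (x : FanAmbient) n ≤ a := hn
  push Not at hn
  obtain ⟨x, hxC, hxn⟩ := hn
  obtain ⟨p, hpT, hxp⟩ := mem_iUnion₂.1 (hT hxC)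
  rcases hxp with hxp | hxp
  · rwa [eq_of_apply_ne_zero (p := p) (n := n) x.2 (by linarith) (by linarith)] at hpT
  · have := (le_abs_self _).trans (lp.norm_apply_le_norm two_ne_zero (x : FanAmbient) n)
    linarith

section EquivariantMap

variable {K : Type*} [TopologicalSpace K] [MulAction MegGroup K] [ContinuousSMul MegGroup K]
  {i : ↥MetricFan → K}

lemma tendsto_fanPt_of_tendsto_midpoint [RegularSpace K] (hi : Continuous i)
    (heq : ∀ (g : MegGroup) (x : ↥MetricFan), i ((g : ↥MetricFan ≃ₜ ↥MetricFan) x) = g • i x)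
    {l : Filter ℕ+} (hl : l ≤ cofinite) {a b : ℝ} (ha : 0 < a) (hab : a < b) (hb : b ≤ 1)
    (hfree : ∀ k : ℕ+, (k : ℝ)⁻¹ ∉ Ioo a b) {Y : K}
    (hY : Tendsto (fun n => i (fanPt ((a + b) / 2) n)) l (𝓝 Y)) {s : ℝ} (hs : s ∈ Icc a b) :
    Tendsto (fun n => i (fanPt s n)) l (𝓝 Y) := by
  choose g hg_mid hg_fix using
    fun p : ℕ+ × Ioo a b => exists_megGroup_fanPt_midpoint ha hb hfree p.2.2 p.1
  -- convergence along `l ×ˢ ⊤` is convergence along `l`, uniformly in the target point `t`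
  have hg : Tendsto g (l ×ˢ ⊤) (𝓝 1) := tendsto_megGroup_nhds_one fun C hC =>
    (Eventually.prod_inl (hl (eventually_cofinite_forall_apply_le ha hC)) ⊤).mono
      fun p hp x hx => hg_fix p x fun h => (hp x hx).not_gt h.1
  have hseg : Tendsto (fun p : ℕ+ × Ioo a b => i (fanPt p.2 p.1)) (l ×ˢ ⊤) (𝓝 Y) := by
    have := hg.smul (hY.comp tendsto_fst)
    rw [one_smul] at this
    refine this.congr fun p => ?_
    rw [Function.comp_apply, ← heq, hg_mid]
  rw [(closed_nhds_basis Y).tendsto_right_iff]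
  rintro W ⟨hW, hW_closed⟩
  have hWseg := (closed_nhds_basis Y).tendsto_right_iff.1 hseg W ⟨hW, hW_closed⟩
  rw [prod_top, eventually_comap] at hWseg
  filter_upwards [hWseg] with n hn
  have : Ioo a b ⊆ (fun t => i (fanPt t n)) ⁻¹' W := fun t ht => hn ⟨n, t, ht⟩ rfl
  exact (closure_Ioo hab.ne ▸ closure_minimal this
    (hW_closed.preimage (hi.comp (continuous_fanPt n)))) hs

lemma tendsto_fanPt_left_of_tendsto_right [CompactSpace K] [T2Space K] (hi : Continuous i)
    (heq : ∀ (g : MegGroup) (x : ↥MetricFan), i ((g : ↥MetricFan ≃ₜ ↥MetricFan) x) = g • i x)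
    {𝒰 : Ultrafilter ℕ+} (h𝒰 : (𝒰 : Filter ℕ+) ≤ cofinite) {a b : ℝ} (ha : 0 < a) (hab : a < b)
    (hb : b ≤ 1) (hfree : ∀ k : ℕ+, (k : ℝ)⁻¹ ∉ Ioo a b) {Y : K}
    (hY : Tendsto (fun n => i (fanPt b n)) ↑𝒰 (𝓝 Y)) :
    Tendsto (fun n => i (fanPt a n)) ↑𝒰 (𝓝 Y) := by
  obtain ⟨Z, hZ⟩ : ∃ Z, Tendsto (fun n => i (fanPt ((a + b) / 2) n)) ↑𝒰 (𝓝 Z) :=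
    ⟨_, Ultrafilter.le_nhds_lim (𝒰.map fun n => i (fanPt ((a + b) / 2) n))⟩
  have hseg := fun s (hs : s ∈ Icc a b) =>
    tendsto_fanPt_of_tendsto_midpoint hi heq h𝒰 ha hab hb hfree hZ hs
  rw [tendsto_nhds_unique hY (hseg b ⟨hab.le, le_rfl⟩)]
  exact hseg a ⟨le_rfl, hab.le⟩

lemma tendsto_fanPt_inv_of_tendsto_one [CompactSpace K] [T2Space K] (hi : Continuous i)
    (heq : ∀ (g : MegGroup) (x : ↥MetricFan), i ((g : ↥MetricFan ≃ₜ ↥MetricFan) x) = g • i x)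
    {𝒰 : Ultrafilter ℕ+} (h𝒰 : (𝒰 : Filter ℕ+) ≤ cofinite) {Y : K}
    (hY : Tendsto (fun n => i (fanPt 1 n)) ↑𝒰 (𝓝 Y)) (k : ℕ+) :
    Tendsto (fun n => i (fanPt (k : ℝ)⁻¹ n)) ↑𝒰 (𝓝 Y) := by
  induction k using PNat.recOn with
  | one => simpa using hY
  | succ k ih =>
    have hk : (1 : ℝ) ≤ k := by exact_mod_cast (one_le : 1 ≤ k)
    push_cast
    exact tendsto_fanPt_left_of_tendsto_right hi heq h𝒰 (by positivity)
      (inv_strictAnti₀ (by positivity) (lt_add_one _)) (inv_le_one_of_one_le₀ hk)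
      (fun k' => inv_natCast_notMem_Ioo k k') ih

lemma tendsto_fanPoint_of_le_cofinite [CompactSpace K] [T2Space K] (hi : Continuous i)
    (heq : ∀ (g : MegGroup) (x : ↥MetricFan), i ((g : ↥MetricFan ≃ₜ ↥MetricFan) x) = g • i x)
    {𝒰 : Ultrafilter ℕ+} (h𝒰 : (𝒰 : Filter ℕ+) ≤ cofinite) :
    Tendsto (fun n => i (fanPoint n)) ↑𝒰 (𝓝 (i fanZero)) := by
  obtain ⟨Y, hY⟩ : ∃ Y, Tendsto (fun n => i (fanPt 1 n)) ↑𝒰 (𝓝 Y) :=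
    ⟨_, Ultrafilter.le_nhds_lim (𝒰.map fun n => i (fanPt 1 n))⟩
  have hlevels := tendsto_fanPt_inv_of_tendsto_one hi heq h𝒰 hY
  -- on every segment the level `k⁻¹` lies within `k⁻¹` of `0`
  have hY_le : pure Y ≤ 𝓝 (i fanZero) := by
    refine (closed_nhds_basis _).ge_iff.2 fun W ⟨hW, hW_closed⟩ => ?_
    obtain ⟨ε, hε, hball⟩ := Metric.mem_nhds_iff.1 (hi.continuousAt.preimage_mem_nhds hW)
    obtain ⟨k, hk⟩ := exists_nat_one_div_lt hε
    refine hW_closed.mem_of_tendsto (hlevels k.succPNat) (Eventually.of_forall fun n => hball ?_)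
    have hk_pos : (0 : ℝ) < k.succPNat := by positivity
    rw [Metric.mem_ball, dist_fanPt_fanZero ⟨(inv_pos.2 hk_pos).le,
      inv_le_one_of_one_le₀ (by exact_mod_cast (one_le : 1 ≤ k.succPNat))⟩]
    simpa [Nat.succPNat_coe, one_div] using hk
  simpa only [← fanPt_one, (specializes_iff_pure.2 hY_le).eq] using hY

end EquivariantMap

theorem stmt_14_general (K : Type*) [TopologicalSpace K] [CompactSpace K] [T2Space K]
    [MulAction MegGroup K] [ContinuousSMul MegGroup K]
    (i : ↥MetricFan → K) (hi : Continuous i)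
    (heq : ∀ (g : MegGroup) (x : ↥MetricFan),
      i ((g : ↥MetricFan ≃ₜ ↥MetricFan) x) = g • i x) :
    Filter.Tendsto (fun n : ℕ+ => i (fanPoint n)) Filter.atTop (nhds (i fanZero)) ∧
    ¬ Filter.Tendsto (fun n : ℕ+ => fanPoint n) Filter.atTop (nhds fanZero) ∧
    ¬ Topology.IsEmbedding i := by
  have hlim : Tendsto (fun n => i (fanPoint n)) atTop (𝓝 (i fanZero)) :=
    (tendsto_iff_ultrafilter _ _ _).2 fun 𝒰 h𝒰 =>
      tendsto_fanPoint_of_le_cofinite hi heq (h𝒰.trans atTop_le_cofinite)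
  exact ⟨hlim, not_tendsto_fanPoint_fanZero,
    fun hemb => not_tendsto_fanPoint_fanZero (hemb.tendsto_nhds_iff.2 hlim)⟩

theorem stmt_14 (K : Type*) [TopologicalSpace K] [CompactSpace K] [T2Space K]
    [MulAction MegGroup K] [ContinuousSMul MegGroup K]
    (i : ↥MetricFan → K) (hi : Continuous i)
    (heq : ∀ (g : MegGroup) (x : ↥MetricFan),
      i ((g : ↥MetricFan ≃ₜ ↥MetricFan) x) = g • i x)
    (hd : DenseRange i) :
    Filter.Tendsto (fun n : ℕ+ => i (fanPoint n)) Filter.atTop (nhds (i fanZero)) ∧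
    ¬ Filter.Tendsto (fun n : ℕ+ => fanPoint n) Filter.atTop (nhds fanZero) ∧
    ¬ Topology.IsEmbedding i :=
  stmt_14_general K i hi heq
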